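/- Let v₀, v₁ be vectors of an even hyperbolic lattice L lying in the same positive cone 𝒫 (so ⟨v₀,v₀⟩ > 0, ⟨v₁,v₁⟩ > 0, ⟨v₀,v₁⟩ > 0). For any negative integer a, the set {v ∈ L : ⟨v,v⟩ = a, ⟨v,v₀⟩ > 0, ⟨v,v₁⟩ < 0} is finite. -/
import Mathlib

private lemma abs_le_of_sq_le' {t R : ℤ} (h : t ^ 2 ≤ R) : |t| ≤ R := by
  rcases le_or_gt (|t|) 0 with h0 | h0
  · nlinarith only [sq_nonneg t, h, h0]
  · have h1 : 1 ≤ |t| := h0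
    nlinarith only [sq_abs t, h, h1, abs_nonneg t]

/-- Pulling an integer scalar out of the second slot of `B`. -/
private lemma Bsm2 {L : Type*} [AddCommGroup L] [Module ℤ L]
    (B : L →ₗ[ℤ] L →ₗ[ℤ] ℤ) (c : ℤ) (x y : L) :
    B x (c • y) = c * B x y := by
  rw [map_zsmul]; simp [zsmul_eq_mul]

/-- Pulling an integer scalar out of the first slot of `B`. -/
private lemma Bsm1 {L : Type*} [AddCommGroup L] [Module ℤ L]
    (B : L →ₗ[ℤ] L →ₗ[ℤ] ℤ) (hsymm : ∀ x y, B x y = B y x) (c : ℤ) (x y : L) :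
    B (c • x) y = c * B x y := by
  rw [hsymm, map_zsmul, hsymm y x]; simp [zsmul_eq_mul]

/-- Cauchy–Schwarz on the negative definite part orthogonal to `v₀`. -/
private lemma cs_neg {L : Type*} [AddCommGroup L] [Module ℤ L]
    (B : L →ₗ[ℤ] L →ₗ[ℤ] ℤ) (hsymm : ∀ x y, B x y = B y x) (v₀ : L)
    (hyp : ∀ x, B v₀ x = 0 → x ≠ 0 → B x x < 0)
    {w x : L} (hw : B v₀ w = 0) (hx : B v₀ x = 0) :
    (B w x) ^ 2 ≤ B w w * B x x := by
  rcases eq_or_ne x 0 with rfl | hx0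
  · simp
  have hxx : B x x < 0 := hyp x hx hx0
  set y := B x x • w - B w x • x with hy
  have hyv : B v₀ y = 0 := by
    simp [hy, map_sub, Bsm2 B, hw, hx]
  have hyy : B y y ≤ 0 := by
    rcases eq_or_ne y 0 with h | h
    · simp [h]
    · exact (hyp y hyv h).le
  have hexp : B y y = B x x * (B w w * B x x - (B w x) ^ 2) := by
    simp only [hy, map_sub, LinearMap.sub_apply, Bsm1 B hsymm, Bsm2 B]
    rw [hsymm x w]
    ring
  nlinarith only [hyy, hxx, hexp]

set_option maxHeartbeats 1600000 in
/-- Let `v₀, v₁` be lattice vectors in the same positive cone `𝒫` of an even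
hyperbolic lattice `L` (so `⟨v₀,v₀⟩ > 0`, `⟨v₁,v₁⟩ > 0`, `⟨v₀,v₁⟩ > 0`).  For
any negative integer `a`, the set
`{v ∈ L : ⟨v,v⟩ = a, ⟨v,v₀⟩ > 0, ⟨v,v₁⟩ < 0}` is finite. -/
theorem finiteness_separating_vectors
    (L : Type*) [AddCommGroup L] [Module ℤ L] [Module.Free ℤ L] [Module.Finite ℤ L]
    (B : L →ₗ[ℤ] L →ₗ[ℤ] ℤ)
    (hsymm : ∀ x y, B x y = B y x)
    (hnondeg : ∀ x, (∀ y, B x y = 0) → x = 0)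
    (heven : ∀ x, 2 ∣ B x x)
    (v₀ v₁ : L) (hv₀ : 0 < B v₀ v₀) (hv₁ : 0 < B v₁ v₁) (hcone : 0 < B v₀ v₁)
    (hyp : ∀ x, B v₀ x = 0 → x ≠ 0 → B x x < 0)
    (a : ℤ) (ha : a < 0) :
    Set.Finite {v : L | B v v = a ∧ 0 < B v v₀ ∧ B v v₁ < 0} := by
  classical
  have hc1 : (1 : ℤ) ≤ B v₀ v₀ := hv₀
  have hb1 : (1 : ℤ) ≤ B v₁ v₁ := hv₁
  have hm1 : (1 : ℤ) ≤ B v₀ v₁ := hcone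
  obtain ⟨c, hc⟩ : ∃ x, B v₀ v₀ = x := ⟨_, rfl⟩
  obtain ⟨m, hm⟩ : ∃ x, B v₀ v₁ = x := ⟨_, rfl⟩
  obtain ⟨b, hb⟩ : ∃ x, B v₁ v₁ = x := ⟨_, rfl⟩
  rw [hc] at hv₀ hc1
  rw [hm] at hcone hm1
  rw [hb] at hv₁ hb1
  -- the projection of `v₁` orthogonal to `v₀` has nonpositive norm
  have hQ : 0 ≤ m ^ 2 - c * b := by
    obtain ⟨w₁, hw₁⟩ : ∃ x, c • v₁ - m • v₀ = x := ⟨_, rfl⟩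
    have hperp : B v₀ w₁ = 0 := by
      rw [← hw₁]
      simp only [map_sub, Bsm2 B]
      rw [hm, hc]; ring
    have h1 : B w₁ w₁ ≤ 0 := by
      rcases eq_or_ne w₁ 0 with h | h
      · simp [h]
      · exact (hyp w₁ hperp h).le
    have h2 : B w₁ w₁ = c * (c * b - m ^ 2) := by
      rw [← hw₁]
      simp only [map_sub, LinearMap.sub_apply, Bsm1 B hsymm, Bsm2 B]
      rw [hsymm v₁ v₀, hm, hb, hc]; ring
    nlinarith only [hv₀, h1, h2]
  obtain ⟨S, hS⟩ : ∃ x, (-a) * (m ^ 2 - c * b) = x := ⟨_, rfl⟩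
  obtain ⟨M, hM⟩ : ∃ x, S * c - c ^ 2 * a = x := ⟨_, rfl⟩
  obtain ⟨N, hN⟩ : ∃ N : L → ℤ, N = fun e =>
      S * |B v₀ e| + M * (-(B (c • e - B v₀ e • v₀) (c • e - B v₀ e • v₀))) := ⟨_, rfl⟩
  -- key coordinate bound
  have key : ∀ v, B v v = a → 0 < B v v₀ → B v v₁ < 0 → ∀ e : L, |B v e| ≤ N e := by
    intro v hvv hs ht e
    obtain ⟨s, hsv⟩ : ∃ x, B v v₀ = x := ⟨_, rfl⟩
    rw [hsv] at hs
    obtain ⟨w, hw⟩ : ∃ x, c • v - s • v₀ = x := ⟨_, rfl⟩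
    obtain ⟨w₁, hw₁⟩ : ∃ x, c • v₁ - m • v₀ = x := ⟨_, rfl⟩
    have hwp : B v₀ w = 0 := by
      rw [← hw]
      simp only [map_sub, Bsm2 B]
      rw [hsymm v₀ v, hsv, hc]; ring
    have hw₁p : B v₀ w₁ = 0 := by
      rw [← hw₁]
      simp only [map_sub, Bsm2 B]
      rw [hm, hc]; ring
    have hww : B w w = c ^ 2 * a - s ^ 2 * c := by
      rw [← hw]
      simp only [map_sub, LinearMap.sub_apply, Bsm1 B hsymm, Bsm2 B]
      rw [hsymm v₀ v, hvv, hsv, hc]; ring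
    have hw₁w₁ : B w₁ w₁ = c ^ 2 * b - m ^ 2 * c := by
      rw [← hw₁]
      simp only [map_sub, LinearMap.sub_apply, Bsm1 B hsymm, Bsm2 B]
      rw [hsymm v₁ v₀, hm, hb, hc]; ring
    have hww₁ : B w w₁ = c ^ 2 * B v v₁ - s * m * c := by
      rw [← hw, ← hw₁]
      simp only [map_sub, LinearMap.sub_apply, Bsm1 B hsymm, Bsm2 B]
      rw [hsv, hm, hc]; ring
    have hCS : (B w w₁) ^ 2 ≤ B w w * B w₁ w₁ := cs_neg B hsymm v₀ hyp hwp hw₁p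
    have hs1 : (1 : ℤ) ≤ s := hs
    have ht1 : B v v₁ ≤ -1 := by linarith [Int.lt_iff_add_one_le.mp ht]
    have hsmc : 0 < s * m * c := by positivity
    have step1 : s * m * c < -(B w w₁) := by
      rw [hww₁]; nlinarith only [hc1, ht1]
    have step2 : (s * m * c) ^ 2 < (B w w₁) ^ 2 := by
      nlinarith only [step1, hsmc]
    have step3a : (s * m * c) ^ 2 < (c ^ 2 * a - s ^ 2 * c) * (c ^ 2 * b - m ^ 2 * c) := by
      calc (s * m * c) ^ 2 < (B w w₁) ^ 2 := step2
        _ ≤ B w w * B w₁ w₁ := hCS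
        _ = (c ^ 2 * a - s ^ 2 * c) * (c ^ 2 * b - m ^ 2 * c) := by rw [hww, hw₁w₁]
    have step3 : c ^ 2 * (s ^ 2 * m ^ 2) <
        c ^ 2 * ((s ^ 2 - c * a) * (m ^ 2 - c * b)) := by
      calc c ^ 2 * (s ^ 2 * m ^ 2) = (s * m * c) ^ 2 := by ring
        _ < (c ^ 2 * a - s ^ 2 * c) * (c ^ 2 * b - m ^ 2 * c) := step3a
        _ = c ^ 2 * ((s ^ 2 - c * a) * (m ^ 2 - c * b)) := by ring
    have step4 : s ^ 2 * m ^ 2 < (s ^ 2 - c * a) * (m ^ 2 - c * b) :=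
      lt_of_mul_lt_mul_left step3 (by positivity)
    have step5 : b * s ^ 2 < (-a) * (m ^ 2 - c * b) := by
      nlinarith only [step4, hv₀]
    have hs2S : s ^ 2 ≤ S := by
      rw [← hS]; nlinarith only [step5, hb1, sq_nonneg s]
    have hsS : s ≤ S := by nlinarith only [hs2S, hs1]
    have hMw : -(B w w) ≤ M := by
      rw [hww, ← hM]; nlinarith only [hs2S, hv₀]
    have hww0 : 0 ≤ -(B w w) := by
      rcases eq_or_ne w 0 with h | h
      · simp [h]
      · linarith [hyp w hwp h]
    obtain ⟨e', he'⟩ : ∃ x, c • e - B v₀ e • v₀ = x := ⟨_, rfl⟩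
    have hep : B v₀ e' = 0 := by
      rw [← he']
      simp only [map_sub, Bsm2 B]
      rw [hc]; ring
    have hDe : 0 ≤ -(B e' e') := by
      rcases eq_or_ne e' 0 with h | h
      · simp [h]
      · linarith [hyp e' hep h]
    have hCSe : (B w e') ^ 2 ≤ B w w * B e' e' := cs_neg B hsymm v₀ hyp hwp hep
    have hwe : B w e' = c * B w e := by
      rw [← he']
      simp only [map_sub, Bsm2 B]
      rw [hsymm w v₀, hwp]; ring
    have habs2 : (B w e) ^ 2 ≤ M * (-(B e' e')) := by
      have h1 : (c * B w e) ^ 2 ≤ (-(B w w)) * (-(B e' e')) := by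
        rw [← hwe]; nlinarith only [hCSe]
      have h2 : (-(B w w)) * (-(B e' e')) ≤ M * (-(B e' e')) :=
        mul_le_mul_of_nonneg_right hMw hDe
      have hcc : 1 * (B w e) ^ 2 ≤ c ^ 2 * (B w e) ^ 2 :=
        mul_le_mul_of_nonneg_right (by nlinarith only [hc1]) (sq_nonneg (B w e))
      nlinarith only [h1, h2, hcc]
    have habs : |B w e| ≤ M * (-(B e' e')) := abs_le_of_sq_le' habs2
    have hdec : B w e = c * B v e - s * B v₀ e := by
      rw [← hw]
      simp only [map_sub, LinearMap.sub_apply, Bsm1 B hsymm]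
    have h1 : |B v e| ≤ |c * B v e| := by
      rw [abs_mul, abs_of_pos hv₀]
      nlinarith only [abs_nonneg (B v e), hc1]
    have h2 : |c * B v e| ≤ s * |B v₀ e| + |B w e| := by
      have hrw : c * B v e = s * B v₀ e + B w e := by rw [hdec]; ring
      rw [hrw]
      calc |s * B v₀ e + B w e| ≤ |s * B v₀ e| + |B w e| := abs_add_le _ _
        _ = s * |B v₀ e| + |B w e| := by rw [abs_mul, abs_of_pos hs]
    have h3 : s * |B v₀ e| ≤ S * |B v₀ e| :=
      mul_le_mul_of_nonneg_right hsS (abs_nonneg _)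
    have hNe : N e = S * |B v₀ e| + M * (-(B e' e')) := by
      rw [hN, ← he']
    rw [hNe]
    linarith only [h1, h2, h3, habs]
  -- finiteness via coordinates in a finite box
  let bL := Module.Free.chooseBasis ℤ L
  have hfin : (Set.pi Set.univ fun i => Set.Icc (-(N (bL i))) (N (bL i))).Finite :=
    Set.Finite.pi fun i => Set.finite_Icc _ _
  apply Set.Finite.of_finite_image (f := fun v i => B v (bL i))
  · apply hfin.subset
    rintro x ⟨v, ⟨hvv, hs, ht⟩, rfl⟩
    intro i _
    have := abs_le.mp (key v hvv hs ht (bL i))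
    exact ⟨this.1, this.2⟩
  · rintro v ⟨hvv, hs, ht⟩ v' ⟨hvv', hs', ht'⟩ hEq
    have hz : ∀ i, B (v - v') (bL i) = 0 := by
      intro i
      have h0 := congrFun hEq i
      simp only [map_sub, LinearMap.sub_apply]
      simpa using sub_eq_zero.mpr h0
    have hzero : v - v' = 0 := by
      apply hnondeg
      intro y
      have hB : B (v - v') = 0 := bL.ext fun i => by simpa using hz i
      rw [hB]
      rfl
    exact sub_eq_zero.mp hzero
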